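/- arXiv:0909.3507 — 7 statements merged into one kernel-verified Lean document; each statement's English description precedes it below -/
import Mathlib

section
/- Let p be a prime and n, t ∈ ℕ. The determinant map det : RC_n(𝔽_{p^t}) → 𝔽_{p^t}^* is surjective. Consequently, the subgroup RC_n(𝔽_{p^t}) ∩ SL_n(𝔽_{p^t}) has index p^t − 1 in RC_n(𝔽_{p^t}), and the number of circulant (n × n)-matrices of determinant 1 over 𝔽_{p^t} equals |RC_n(𝔽_{p^t})| / (p^t − 1). -/
/-!
Write `n = m * p ^ k` with `p ∤ m`. By the Chinese remainder theorem `ℤ/n ≃ ℤ/m × ℤ/p^k`, and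
under this reindexing the circulant matrix of a function supported on `ℤ/m × {0}` is block
diagonal with `p ^ k` equal `m × m` circulant blocks. The block `1 + c • J` has determinant
`1 + m c` with `m` invertible in `F`, so these matrices realise every `p ^ k`-th power, i.e.
every element of the perfect field `F`. The index statement is the first isomorphism theorem
for `det` restricted to the group of invertible circulant matrices.
-/

open Matrix

namespace Matrix

variable {α R G H K : Type*} [AddGroup G] [AddGroup H] [AddGroup K]

theorem circulant_comp_addEquiv (e : K ≃+ G) (v : G → α) :
    circulant (v ∘ e) = (circulant v).submatrix e.toEquiv e.toEquiv := by
  ext i j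
  simp [map_sub]

theorem circulant_prod_eq_blockDiagonal [Zero α] [DecidableEq H] (w : G → α) :
    circulant (fun x : G × H => if x.2 = 0 then w x.1 else 0) =
      blockDiagonal fun _ : H => circulant w := by
  ext ⟨g, h⟩ ⟨g', h'⟩
  by_cases hh : h = h' <;> simp [blockDiagonal_apply, sub_eq_zero, hh]

variable [CommRing R]

theorem det_one_add_circulant_const [Fintype G] [DecidableEq G] (c : R) :
    (1 + circulant fun _ : G => c).det = 1 + Fintype.card G * c := by
  have : circulant (fun _ : G => c) =
      replicateCol Unit (fun _ : G => c) * replicateRow Unit (fun _ : G => (1 : R)) := by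
    ext i j
    simp [Matrix.mul_apply]
  rw [this, det_one_add_replicateCol_mul_replicateRow]
  simp [dotProduct, mul_comm]

theorem exists_det_circulant_eq_det_pow [Fintype G] [Fintype H] [Fintype K] [DecidableEq G]
    [DecidableEq H] [DecidableEq K] (e : K ≃+ G × H) (w : G → R) :
    ∃ v : K → R, (circulant v).det = (circulant w).det ^ Fintype.card H :=
  ⟨(fun x : G × H => if x.2 = 0 then w x.1 else 0) ∘ e, by
    rw [circulant_comp_addEquiv, det_submatrix_equiv_self, circulant_prod_eq_blockDiagonal,
      det_blockDiagonal, Finset.prod_const, Finset.card_univ]⟩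

theorem exists_det_circulant_fin_eq_det_pow {m s n : ℕ} [NeZero m] [NeZero s] [NeZero n]
    (hn : n = m * s) (hms : m.Coprime s) (w : ZMod m → R) :
    ∃ v : Fin n → R, (circulant v).det = (circulant w).det ^ s := by
  have e : Fin n ≃+ ZMod m × ZMod s := ((ZMod.finEquiv n).trans
    ((ZMod.ringEquivCongr hn).trans (ZMod.chineseRemainder hms))).toAddEquiv
  simpa [ZMod.card] using exists_det_circulant_eq_det_pow e w

theorem det_circulant_surjective (F : Type*) [Field F] (p : ℕ) [Fact p.Prime] [CharP F p]
    [PerfectRing F p] {n : ℕ} (hn : 0 < n) :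
    Function.Surjective fun v : Fin n → F => (circulant v).det := by
  intro x
  have hp := (Fact.out : p.Prime)
  set k := n.factorization p
  set m := n / p ^ k
  have hmn : n = m * p ^ k := (mul_comm m _).trans (Nat.ordProj_mul_ordCompl_eq_self n p) |>.symm
  have hpm : ¬ p ∣ m := Nat.not_dvd_ordCompl hp hn.ne'
  have : NeZero n := ⟨hn.ne'⟩
  have : NeZero m := ⟨(Nat.ordCompl_pos p hn.ne').ne'⟩
  have : NeZero (p ^ k) := ⟨(pow_pos hp.pos k).ne'⟩
  have hm : (m : F) ≠ 0 := by rwa [Ne, CharP.cast_eq_zero_iff F p]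
  set y := (iterateFrobeniusEquiv F p k).symm x
  have hy : y ^ p ^ k = x := (iterateFrobeniusEquiv F p k).apply_symm_apply x
  set c := (y - 1) / m
  have hw : (circulant (Pi.single 0 1 + fun _ : ZMod m => c)).det = y := by
    rw [circulant_add, circulant_single_one, det_one_add_circulant_const, ZMod.card,
      mul_div_cancel₀ _ hm, add_sub_cancel]
  obtain ⟨v, hv⟩ := exists_det_circulant_fin_eq_det_pow hmn
    ((hp.coprime_iff_not_dvd.mpr hpm).symm.pow_right k) (Pi.single 0 1 + fun _ : ZMod m => c)
  exact ⟨v, hv.trans (by rw [hw, hy])⟩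

variable (n : ℕ) (α : Type*) [NonAssocSemiring α]

def circulantSubmonoid : Submonoid (Matrix (Fin n) (Fin n) α) where
  carrier := {M | ∃ v, M = circulant v}
  mul_mem' := by
    rintro _ _ ⟨v, rfl⟩ ⟨w, rfl⟩
    exact ⟨_, Fin.circulant_mul v w⟩
  one_mem' := ⟨_, (Fin.circulant_ite α n).symm⟩

end Matrix

namespace Submonoid

variable {M N : Type*} [Monoid M] [Finite M] (S : Submonoid M)

theorem inv_val_mem_of_finite {U : Mˣ} (hU : (U : M) ∈ S) : ((U⁻¹ : Mˣ) : M) ∈ S := by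
  obtain ⟨k, hk⟩ := mem_powers_iff_mem_zpowers.mpr (inv_mem (Subgroup.mem_zpowers U))
  rw [← hk, Units.val_pow_eq_pow_val]
  exact pow_mem hU k

theorem card_isUnit_mem_eq_card_units_mul_card_ker [Monoid N] (f : M →* N)
    (hf : ∀ u : Nˣ, ∃ x ∈ S, f x = u) (hunit : ∀ x, IsUnit (f x) → IsUnit x) :
    Nat.card {x // IsUnit x ∧ x ∈ S} = Nat.card Nˣ * Nat.card {x // x ∈ S ∧ f x = 1} := by
  let φ : S.units →* Nˣ := (Units.map f).comp S.units.subtype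
  have hφ : Function.Surjective φ := fun u => by
    obtain ⟨x, hxS, hx⟩ := hf u
    have hxu := hunit x (hx ▸ u.isUnit)
    exact ⟨⟨hxu.unit, hxS, S.inv_val_mem_of_finite hxS⟩, Units.ext hx⟩
  have card_units : Nat.card {x // IsUnit x ∧ x ∈ S} = Nat.card S.units := Nat.card_congr
    { toFun := fun x => ⟨x.2.1.unit, x.2.2, S.inv_val_mem_of_finite x.2.2⟩
      invFun := fun U => ⟨U.1, U.1.isUnit, U.2.1⟩
      left_inv := fun _ => rfl
      right_inv := fun _ => Subtype.ext (Units.ext rfl) }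
  have card_ker : Nat.card {x // x ∈ S ∧ f x = 1} = Nat.card φ.ker := Nat.card_congr
    { toFun := fun x => ⟨⟨(hunit x (x.2.2.symm ▸ isUnit_one)).unit, x.2.1,
        S.inv_val_mem_of_finite x.2.1⟩, Units.ext x.2.2⟩
      invFun := fun U => ⟨U.1.1, U.1.2.1, congrArg Units.val U.2⟩
      left_inv := fun _ => rfl
      right_inv := fun _ => Subtype.ext (Subtype.ext (Units.ext rfl)) }
  rw [card_units, card_ker, ← φ.ker.card_mul_index, Subgroup.index_ker, φ.range_eq_top.mpr hφ,
    Subgroup.card_top, mul_comm]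

end Submonoid

theorem circulant_det_surjective_and_index_general
    (p t n : ℕ) (hn : 0 < n)
    (F : Type*) [Field F] [Fintype F] (hF : Fintype.card F = p ^ t) :
    (∀ u : Fˣ, ∃ M : Matrix (Fin n) (Fin n) F,
        IsUnit M ∧ (∃ v, M = Matrix.circulant v) ∧ M.det = (u : F)) ∧
    Nat.card {M : Matrix (Fin n) (Fin n) F // IsUnit M ∧ ∃ v, M = Matrix.circulant v} =
      (p ^ t - 1) *
        Nat.card {M : Matrix (Fin n) (Fin n) F // (∃ v, M = Matrix.circulant v) ∧ M.det = 1} ∧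
    Nat.card {M : Matrix (Fin n) (Fin n) F // (∃ v, M = Matrix.circulant v) ∧ M.det = 1} =
      Nat.card {M : Matrix (Fin n) (Fin n) F // IsUnit M ∧ ∃ v, M = Matrix.circulant v} /
        (p ^ t - 1) := by
  classical
  have : Fact (ringChar F).Prime := ⟨CharP.char_is_prime F (ringChar F)⟩
  have hsurj (u : Fˣ) : ∃ M : Matrix (Fin n) (Fin n) F,
      IsUnit M ∧ (∃ v, M = circulant v) ∧ M.det = u := by
    obtain ⟨v, hv : (circulant v).det = u⟩ := det_circulant_surjective F (ringChar F) hn u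
    exact ⟨circulant v, (isUnit_iff_isUnit_det _).mpr (hv ▸ u.isUnit), ⟨v, rfl⟩, hv⟩
  have hcard := (circulantSubmonoid n F).card_isUnit_mem_eq_card_units_mul_card_ker detMonoidHom
    (fun u => by obtain ⟨M, -, hM, hdet⟩ := hsurj u; exact ⟨M, hM, hdet⟩)
    (fun M => (isUnit_iff_isUnit_det M).mpr)
  rw [Nat.card_units, Nat.card_eq_fintype_card (α := F), hF] at hcard
  have hq : 0 < p ^ t - 1 := by
    have := Fintype.one_lt_card (α := F)
    omega
  exact ⟨hsurj, hcard, (Nat.div_eq_of_eq_mul_right hq hcard).symm⟩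

/-- **Corollary**: Let `p` be a prime, `n ≥ 1`, and let `F` be the finite field with `p^t`
elements. Then the determinant map from the invertible circulant `n × n` matrices over `F`
to `Fˣ` is surjective; consequently the circulant matrices of determinant `1` form a subgroup
of index `p^t − 1` in `RC_n(F)`, i.e. there are exactly `|RC_n(F)| / (p^t − 1)` circulant
`n × n` matrices of determinant `1` over `F`. -/
theorem circulant_det_surjective_and_index
    (p t n : ℕ) (hp : p.Prime) (hn : 0 < n)
    (F : Type*) [Field F] [Fintype F] (hF : Fintype.card F = p ^ t) :
    (∀ u : Fˣ, ∃ M : Matrix (Fin n) (Fin n) F,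
        IsUnit M ∧ (∃ v, M = Matrix.circulant v) ∧ M.det = (u : F)) ∧
    Nat.card {M : Matrix (Fin n) (Fin n) F // IsUnit M ∧ ∃ v, M = Matrix.circulant v} =
      (p ^ t - 1) *
        Nat.card {M : Matrix (Fin n) (Fin n) F // (∃ v, M = Matrix.circulant v) ∧ M.det = 1} ∧
    Nat.card {M : Matrix (Fin n) (Fin n) F // (∃ v, M = Matrix.circulant v) ∧ M.det = 1} =
      Nat.card {M : Matrix (Fin n) (Fin n) F // IsUnit M ∧ ∃ v, M = Matrix.circulant v} /
        (p ^ t - 1) :=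
  circulant_det_surjective_and_index_general p t n hn F hF
end

section
/- Let p be a prime and m, t ∈ ℕ with p ∤ m, and let σ : ℤ/mℤ → ℤ/mℤ be the permutation x ↦ p^t·x. For every positive divisor d of m, the set { x ∈ ℤ/mℤ : gcd(x, m) = m/d } (that is, the set (m/d)·(ℤ/mℤ)^*) is invariant under σ and decomposes into exactly φ(d)/ord_d(p^t) orbits of σ, each of cardinality ord_d(p^t). In particular, the cycle structure of σ is ∏_{d ∣ m} (ord_d(p^t))^{φ(d)/ord_d(p^t)}. -/
/-!
Write `c = p ^ t`, a unit of `ℤ/mℤ` since `p ∤ m`. The condition `gcd(x, m) = m/d` says exactly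
that `x` has additive order `d`, so multiplication by the unit `c` preserves it, and there are
`φ(d)` such `x` (`ℤ/mℤ` is cyclic). For such `x`, `c^k x = x` means `d ∣ (c^k - 1)`, i.e.
`(p^t)^k = 1` in `ℤ/dℤ`; hence every orbit in this set has length `ord_d(p^t)`, and the orbits
partition a set of size `φ(d)` into blocks of that size.
-/

theorem Set.Finite.ncard_image_mul_of_ncard_fiber {α β : Type*} {S : Set α} (hS : S.Finite)
    (f : α → β) {n : ℕ} (hfiber : ∀ a ∈ S, {b ∈ S | f b = f a}.ncard = n) :
    (f '' S).ncard * n = S.ncard := by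
  classical
  lift S to Finset α using hS
  rw [← Finset.coe_image, Set.ncard_coe_finset, Set.ncard_coe_finset,
    Finset.card_eq_sum_card_image f S, ← smul_eq_mul, ← Finset.sum_const]
  refine Finset.sum_congr rfl fun _ hb => ?_
  obtain ⟨a, ha, rfl⟩ := Finset.mem_image.1 hb
  rw [← hfiber a ha, ← Set.ncard_coe_finset, Finset.coe_filter]
  rfl

namespace MulAction

variable {M α : Type*} [Monoid M] [MulAction M α] {m : M} {a b : α}

def powersOrbit (m : M) (a : α) : Set α := {b | ∃ k : ℕ, b = m ^ k • a}

theorem mem_powersOrbit_self : a ∈ powersOrbit m a := ⟨0, by rw [pow_zero, one_smul]⟩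

theorem powersOrbit_eq_image_Iio (h : 0 < period m a) :
    powersOrbit m a = (fun k => m ^ k • a) '' Set.Iio (period m a) := by
  ext b
  constructor
  · rintro ⟨k, rfl⟩
    exact ⟨k % period m a, Nat.mod_lt k h, pow_mod_period_smul k⟩
  · rintro ⟨k, -, rfl⟩
    exact ⟨k, rfl⟩

theorem ncard_powersOrbit (h : 0 < period m a) : (powersOrbit m a).ncard = period m a := by
  rw [powersOrbit_eq_image_Iio h, Set.InjOn.ncard_image, Set.ncard_Iio_nat]
  simpa only [smul_iterate_apply, ← period_eq_minimalPeriod] using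
    Function.iterate_injOn_Iio_minimalPeriod (f := (m • ·)) (x := a)

theorem powersOrbit_eq_of_mem (h : 0 < period m a) (hb : b ∈ powersOrbit m a) :
    powersOrbit m b = powersOrbit m a := by
  obtain ⟨j, rfl⟩ := hb
  ext c
  constructor
  · rintro ⟨k, rfl⟩
    exact ⟨k + j, by rw [pow_add, mul_smul]⟩
  · rintro ⟨k, rfl⟩
    -- `a = m ^ (period m a * j) • a`, and the exponent `period m a * j` is at least `j`
    refine ⟨k + period m a * j - j, ?_⟩
    have hj : j ≤ k + period m a * j := le_add_left (Nat.le_mul_of_pos_left j h)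
    rw [smul_smul, ← pow_add, Nat.sub_add_cancel hj, pow_add, mul_smul,
      pow_smul_eq_iff_period_dvd.2 (dvd_mul_right _ _)]

theorem powersOrbit_subset {S : Set α} (hS : ∀ a ∈ S, m • a ∈ S) (ha : a ∈ S) :
    powersOrbit m a ⊆ S := by
  rintro _ ⟨k, rfl⟩
  induction k with
  | zero => simpa using ha
  | succ k ih => rw [pow_succ', mul_smul]; exact hS _ ih

theorem ncard_image_powersOrbit_mul {S : Set α} (hS : S.Finite) (hinv : ∀ a ∈ S, m • a ∈ S)
    {n : ℕ} (hn : 0 < n) (hper : ∀ a ∈ S, period m a = n) :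
    (powersOrbit m '' S).ncard * n = S.ncard := by
  refine hS.ncard_image_mul_of_ncard_fiber _ fun a ha => ?_
  have hpos : 0 < period m a := hper a ha ▸ hn
  have hfiber : {b ∈ S | powersOrbit m b = powersOrbit m a} = powersOrbit m a := by
    ext b
    refine ⟨fun ⟨_, hb⟩ => hb ▸ mem_powersOrbit_self, fun hb => ?_⟩
    exact ⟨powersOrbit_subset hinv ha hb, powersOrbit_eq_of_mem hpos hb⟩
  rw [hfiber, ncard_powersOrbit hpos, hper a ha]

end MulAction

theorem nsmul_eq_self_iff_natCast_eq_one {A : Type*} [AddGroup A] (x : A) (a : ℕ) :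
    a • x = x ↔ (a : ZMod (addOrderOf x)) = 1 := by
  have hsub : ((a : ℤ) - 1) • x = a • x - x := by
    rw [sub_zsmul, one_zsmul, natCast_zsmul, sub_eq_add_neg]
  rw [← sub_eq_zero, ← hsub, ← addOrderOf_dvd_iff_zsmul_eq_zero,
    ← ZMod.intCast_zmod_eq_zero_iff_dvd, Int.cast_sub, Int.cast_natCast, Int.cast_one, sub_eq_zero]

theorem MulAction.period_natCast_eq_orderOf {R : Type*} [Ring R] (a : ℕ) (x : R) :
    MulAction.period (a : R) x = orderOf (a : ZMod (addOrderOf x)) := by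
  refine Nat.dvd_right_iff_eq.1 fun k => ?_
  rw [← MulAction.pow_smul_eq_iff_period_dvd, orderOf_dvd_iff_pow_eq_one, smul_eq_mul,
    ← Nat.cast_pow, ← nsmul_eq_mul, nsmul_eq_self_iff_natCast_eq_one, Nat.cast_pow]

theorem addOrderOf_mul_of_isUnit {R : Type*} [Ring R] {u : R} (hu : IsUnit u) (x : R) :
    addOrderOf (u * x) = addOrderOf x :=
  addOrderOf_injective (AddMonoidHom.mulLeft u) hu.mul_right_injective x

namespace ZMod

variable {m d : ℕ} [NeZero m]

theorem addOrderOf_eq_iff_gcd_val_eq (hd : d ∣ m) (x : ZMod m) :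
    addOrderOf x = d ↔ x.val.gcd m = m / d := by
  rw [← natCast_zmod_val x, addOrderOf_coe _ (NeZero.ne m), val_natCast_of_lt (val_lt x),
    Nat.gcd_comm]
  conv_lhs => rw [← Nat.div_div_self hd (NeZero.ne m)]
  exact Nat.div_eq_iff_eq_of_dvd_dvd (NeZero.ne m) (Nat.gcd_dvd_right _ _) (Nat.div_dvd_of_dvd hd)

theorem ncard_addOrderOf_eq (hd : d ∣ m) : {x : ZMod m | addOrderOf x = d}.ncard = d.totient := by
  classical
  rw [Set.ncard_eq_toFinset_card', Set.toFinset_ofPred]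
  exact IsAddCyclic.card_addOrderOf_eq_totient (by rwa [card])

end ZMod

/-- **Proposition 2.1 (cycle structure of multiplication by `p^t`)**: Let `p` be a prime,
`p ∤ m`, and let `σ : ℤ/mℤ → ℤ/mℤ` be `x ↦ p^t·x`. For every positive divisor `d` of `m`,
the set `{x : gcd(x, m) = m/d}` is invariant under `σ`, every `σ`-orbit in it has cardinality
`ord_d(p^t)`, and it decomposes into exactly `φ(d)/ord_d(p^t)` orbits. -/
theorem cycle_structure_of_mul_prime_pow
    (p t m d : ℕ) (hp : p.Prime) (hm : ¬ p ∣ m) (hd : d ∣ m) :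
    (∀ x : ZMod m, Nat.gcd x.val m = m / d →
        Nat.gcd (((p : ZMod m) ^ t * x).val) m = m / d) ∧
    (∀ x : ZMod m, Nat.gcd x.val m = m / d →
        Nat.card {y : ZMod m | ∃ k : ℕ, y = ((p : ZMod m) ^ t) ^ k * x} =
          orderOf ((p : ZMod d) ^ t)) ∧
    Nat.card {O : Set (ZMod m) | ∃ x : ZMod m, Nat.gcd x.val m = m / d ∧
        O = {y : ZMod m | ∃ k : ℕ, y = ((p : ZMod m) ^ t) ^ k * x}} =
      d.totient / orderOf ((p : ZMod d) ^ t) := by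
  have hpm : p.Coprime m := (Nat.Prime.coprime_iff_not_dvd hp).2 hm
  have : NeZero m := ⟨by rintro rfl; exact hm (dvd_zero p)⟩
  have : NeZero d := ⟨by rintro rfl; exact NeZero.ne m (Nat.eq_zero_of_zero_dvd hd)⟩
  set S := {x : ZMod m | Nat.gcd x.val m = m / d}
  have hS : S = {x | addOrderOf x = d} := by
    ext x; exact (ZMod.addOrderOf_eq_iff_gcd_val_eq hd x).symm
  have hc : (p : ZMod m) ^ t = ((p ^ t : ℕ) : ZMod m) := (Nat.cast_pow p t).symm
  have hinv : ∀ x ∈ S, (p : ZMod m) ^ t * x ∈ S := by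
    simp only [hS, Set.mem_ofPred_eq, hc]
    intro x hx
    rw [addOrderOf_mul_of_isUnit ((ZMod.isUnit_iff_coprime _ _).2 (hpm.pow_left t)), hx]
  have hper : ∀ x ∈ S, MulAction.period ((p : ZMod m) ^ t) x = orderOf ((p : ZMod d) ^ t) := by
    simp only [hS, Set.mem_ofPred_eq]
    intro x hx
    rw [hc, MulAction.period_natCast_eq_orderOf, hx, Nat.cast_pow]
  have hpos : 0 < orderOf ((p : ZMod d) ^ t) := by
    rw [← Nat.cast_pow]
    exact ((ZMod.isUnit_iff_coprime _ d).2
      ((hpm.coprime_dvd_right hd).pow_left t)).isOfFinOrder.orderOf_pos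
  have horbits : {O : Set (ZMod m) | ∃ x : ZMod m, Nat.gcd x.val m = m / d ∧
      O = {y : ZMod m | ∃ k : ℕ, y = ((p : ZMod m) ^ t) ^ k * x}} =
        MulAction.powersOrbit ((p : ZMod m) ^ t) '' S := by
    ext O
    exact exists_congr fun _ => and_congr_right fun _ => eq_comm
  refine ⟨hinv, fun x hx => ?_, ?_⟩
  · rw [Nat.card_coe_set_eq, ← hper x hx]
    exact MulAction.ncard_powersOrbit (hper x hx ▸ hpos)
  · rw [Nat.card_coe_set_eq, horbits, ← ZMod.ncard_addOrderOf_eq hd, ← hS,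
      ← MulAction.ncard_image_powersOrbit_mul (Set.toFinite S) hinv hpos hper,
      Nat.mul_div_cancel _ hpos]
end

section
/- Let p be a prime and r ∈ ℕ. Then for all integers i, j with 1 ≤ i, j ≤ p^r, the binomial coefficient congruence C(p^r − j, p^r − i) ≡ (−1)^{i+j} · C(i − 1, j − 1) (mod p) holds. -/
/-!
Write `n = p ^ r`. Since `p ∣ C(n, l)` for `0 < l < n`, the Chu–Vandermonde identity gives
`C(n + m, k) ≡ C(m, k) (mod p)` for every integer `m` and every `k < n` (generalized binomial
coefficients). For `b ≤ a < n` take `m = -(b + 1)` and `k = a - b`: by symmetry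
`C(n - 1 - b, n - 1 - a) = C(n - 1 - b, a - b)`, and upper negation turns
`C(-(b + 1), a - b)` into `(-1) ^ (a - b) * C(a, b)`.
-/

open Finset

theorem Ring.cast_choose_prime_pow_add {R : Type*} [Ring R] {p : ℕ} [CharP R p] (hp : p.Prime)
    (r : ℕ) (m : ℤ) {k : ℕ} (hk : k < p ^ r) :
    ((Ring.choose (((p ^ r : ℕ) : ℤ) + m) k : ℤ) : R) = Ring.choose m k := by
  have hvanish : ∀ l ∈ range k,
      ((Ring.choose ((p ^ r : ℕ) : ℤ) (l + 1) * Ring.choose m (k - (l + 1)) : ℤ) : R) = 0 := by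
    intro l hl
    have hdvd : p ∣ (p ^ r).choose (l + 1) :=
      hp.dvd_choose_pow l.succ_ne_zero (by have := mem_range.1 hl; omega)
    rw [Ring.choose_natCast, Int.cast_mul, Int.cast_natCast, (CharP.cast_eq_zero_iff R p _).2 hdvd,
      zero_mul]
  rw [Ring.add_choose_eq k (Commute.all _ _), Nat.sum_antidiagonal_eq_sum_range_succ_mk,
    sum_range_succ', Int.cast_add, Int.cast_sum, sum_eq_zero hvanish, Ring.choose_zero_right,
    one_mul, zero_add, Nat.sub_zero]

theorem Ring.choose_neg_succ (b k : ℕ) :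
    Ring.choose (-((b : ℤ) + 1)) k = (-1) ^ k * (b + k).choose k := by
  rw [Ring.choose_neg, show (b : ℤ) + 1 + k - 1 = ((b + k : ℕ) : ℤ) by push_cast; ring,
    Ring.choose_natCast, Units.smul_def, Int.coe_negOnePow_natCast, smul_eq_mul]

theorem Nat.cast_choose_prime_pow_sub_one_sub {R : Type*} [Ring R] {p : ℕ} [CharP R p]
    (hp : p.Prime) {r a b : ℕ} (ha : a < p ^ r) (hb : b < p ^ r) :
    ((p ^ r - 1 - b).choose (p ^ r - 1 - a) : R) = (-1) ^ (a + b) * a.choose b := by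
  rcases lt_or_ge a b with hab | hba
  · have hlt : p ^ r - 1 - b < p ^ r - 1 - a := by omega
    simp [Nat.choose_eq_zero_of_lt hlt, Nat.choose_eq_zero_of_lt hab]
  obtain ⟨k, rfl⟩ := Nat.exists_eq_add_of_le hba
  have hsymm : (p ^ r - 1 - b).choose (p ^ r - 1 - (b + k)) = (p ^ r - 1 - b).choose k :=
    Nat.choose_symm_of_eq_add (by omega)
  have hshift : ((p ^ r - 1 - b : ℕ) : ℤ) = ((p ^ r : ℕ) : ℤ) + -((b : ℤ) + 1) := by omega
  calc ((p ^ r - 1 - b).choose (p ^ r - 1 - (b + k)) : R)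
      = ((Ring.choose ((p ^ r - 1 - b : ℕ) : ℤ) k : ℤ) : R) := by
        rw [hsymm, Ring.choose_natCast, Int.cast_natCast]
    _ = ((Ring.choose (-((b : ℤ) + 1)) k : ℤ) : R) := by
        rw [hshift, Ring.cast_choose_prime_pow_add hp r _ (by omega)]
    _ = (-1) ^ (b + k + b) * (b + k).choose b := by
        rw [Ring.choose_neg_succ, Nat.choose_symm_add,
          show b + k + b = k + 2 * b by ring, pow_add, pow_mul]
        push_cast
        simp

/-- **Corollary 2.4 (entry form)**: Let `p` be a prime and `r ∈ ℕ`. Then for all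
`1 ≤ i, j ≤ p^r` we have `C(p^r − j, p^r − i) ≡ (−1)^{i+j} · C(i − 1, j − 1) (mod p)`. -/
theorem choose_sub_congr_prime_pow
    (p r : ℕ) (hp : p.Prime) (i j : ℕ)
    (hi1 : 1 ≤ i) (hip : i ≤ p ^ r) (hj1 : 1 ≤ j) (hjp : j ≤ p ^ r) :
    (((p ^ r - j).choose (p ^ r - i) : ZMod p)) =
      (-1) ^ (i + j) * (((i - 1).choose (j - 1) : ZMod p)) := by
  have key := Nat.cast_choose_prime_pow_sub_one_sub (R := ZMod p) hp (r := r) (a := i - 1)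
    (b := j - 1) (by omega) (by omega)
  rw [show p ^ r - 1 - (j - 1) = p ^ r - j by omega,
    show p ^ r - 1 - (i - 1) = p ^ r - i by omega] at key
  rw [key, show i + j = i - 1 + (j - 1) + 2 by omega, pow_add _ _ 2, neg_one_sq, mul_one]
end

section
/- Let p be a prime and r ∈ ℕ. Then the Pascal matrix Pasc_{p^r}(𝔽_p) of size p^r × p^r over 𝔽_p equals the r-fold Kronecker product Pasc_p(𝔽_p)^{⊗ r} of the (p × p)-Pascal matrix over 𝔽_p with itself. -/
/-!
Lucas' theorem expresses `C(i, j)` modulo `p` as the product, over the base-`p` digit positions,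
of the binomial coefficients of the digits of `i` and `j`. On the other side, unfolding the
Kronecker power shows that the `(i, j)` entry of `A^{⊗ r}` is the product of the entries of `A`
indexed by the digits of `i` and `j`. For `A = Pasc_p` these are the same product.
-/

/-- The `r`-fold Kronecker power of a `(p × p)`-matrix, with the index set `Fin (p^r)`
identified with `r`-tuples of base-`p` digits (as in Lucas' theorem). -/
def kroneckerPow {α : Type*} [CommSemiring α] {p : ℕ} (A : Matrix (Fin p) (Fin p) α) :
    (r : ℕ) → Matrix (Fin (p ^ r)) (Fin (p ^ r)) α
  | 0 => 1
  | r + 1 =>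
      Matrix.reindex
        (finProdFinEquiv.trans (finCongr (by ring : p * p ^ r = p ^ (r + 1))))
        (finProdFinEquiv.trans (finCongr (by ring : p * p ^ r = p ^ (r + 1))))
        (Matrix.kroneckerMap (· * ·) A (kroneckerPow A r))

theorem Nat.mod_pow_div_pow_mod (n p : ℕ) {r t : ℕ} (h : t < r) :
    n % p ^ r / p ^ t % p = n / p ^ t % p := by
  rw [← Nat.add_sub_of_le h.le, pow_add, Nat.mod_mul_right_div_self,
    Nat.mod_mod_of_dvd _ (dvd_pow_self p (Nat.sub_ne_zero_of_lt h))]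

def finDigit {p r : ℕ} (i : Fin (p ^ r)) (t : Fin r) : Fin p :=
  ⟨i / p ^ (t : ℕ) % p, Nat.mod_lt _ <| (pow_pos_iff t.pos.ne').mp i.pos⟩

theorem finDigit_castSucc {p r : ℕ} (i : Fin (p ^ (r + 1))) (t : Fin r) :
    finDigit i t.castSucc = finDigit (i.cast (pow_succ' p r)).modNat t :=
  Fin.ext (Nat.mod_pow_div_pow_mod i p t.isLt).symm

theorem finDigit_last {p r : ℕ} (i : Fin (p ^ (r + 1))) :
    finDigit i (Fin.last r) = (i.cast (pow_succ' p r)).divNat :=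
  Fin.ext <| Nat.mod_eq_of_lt <| Nat.div_lt_of_lt_mul <| by rw [← pow_succ]; exact i.isLt

section KroneckerPow

variable {α : Type*} [CommSemiring α] {p : ℕ} (A : Matrix (Fin p) (Fin p) α)

theorem kroneckerPow_succ_apply (r : ℕ) (i j : Fin (p ^ (r + 1))) :
    kroneckerPow A (r + 1) i j =
      A (i.cast (pow_succ' p r)).divNat (j.cast (pow_succ' p r)).divNat *
        kroneckerPow A r (i.cast (pow_succ' p r)).modNat (j.cast (pow_succ' p r)).modNat :=
  rfl

theorem kroneckerPow_apply (r : ℕ) (i j : Fin (p ^ r)) :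
    kroneckerPow A r i j = ∏ t, A (finDigit i t) (finDigit j t) := by
  induction r with
  | zero =>
    obtain rfl : i = j := Subsingleton.elim (α := Fin 1) i j
    simp [kroneckerPow]
  | succ r ih =>
    rw [kroneckerPow_succ_apply, ih, Fin.prod_univ_castSucc, mul_comm]
    simp only [finDigit_castSucc, finDigit_last]

end KroneckerPow

/-- **Equation (3) / Lucas' theorem for Pascal matrices**: Let `p` be a prime and `r ∈ ℕ`.
Then the Pascal matrix `Pasc_{p^r}(𝔽_p)` equals the `r`-fold Kronecker product
`Pasc_p(𝔽_p)^{⊗ r}` (under base-`p` digit indexing). -/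
theorem pascal_matrix_eq_kronecker_pow (p r : ℕ) (hp : p.Prime) :
    (Matrix.of fun i j : Fin (p ^ r) => (((i : ℕ).choose (j : ℕ) : ZMod p))) =
      kroneckerPow (Matrix.of fun i j : Fin p => (((i : ℕ).choose (j : ℕ) : ZMod p))) r := by
  have : Fact p.Prime := ⟨hp⟩
  ext i j
  have lucas := (ZMod.intCast_eq_intCast_iff _ _ p).mpr
    (Choose.choose_modEq_prod_range_choose i.isLt j.isLt)
  push_cast at lucas
  rw [Matrix.of_apply, kroneckerPow_apply, lucas, ← Fin.prod_univ_eq_prod_range]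
  simp only [Matrix.of_apply, finDigit]
end

section
/- Let p be a prime and n, t ∈ ℕ, and let K_t be the kernel of the reduction homomorphism GL_n(ℤ/p^{t+1}ℤ) → GL_n(ℤ/p^tℤ), that is, K_t = { I_n + p^t·(a_{ij}) : a_{ij} ∈ ℤ/p^{t+1}ℤ }. Then the number of circulant matrices in K_t is exactly p^n, i.e., |K_t ∩ RC_n(ℤ/p^{t+1}ℤ)| = p^n. -/
/-!
A circulant matrix is determined by its first column `v`, and it reduces to the identity modulo
`p ^ t` exactly when `v ≡ e₀`, which leaves `p` lifts for each of the `n` entries. Such a matrix is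
automatically invertible: its determinant is `≡ 1 mod p ^ t`, and as `2 t ≥ t + 1` the kernel of
the reduction squares to zero, so the determinant is `1` plus a nilpotent.
-/

namespace ZMod

variable {m n : ℕ}

theorem sq_eq_zero_of_castHom_eq_zero (h : m ∣ n) (hsq : n ∣ m ^ 2) {x : ZMod n}
    (hx : castHom h (ZMod m) x = 0) : x ^ 2 = 0 := by
  rw [castHom_apply, ← intCast_cast, intCast_zmod_eq_zero_iff_dvd] at hx
  rw [← intCast_zmod_cast x, ← Int.cast_pow, intCast_zmod_eq_zero_iff_dvd]
  exact (Int.natCast_dvd_natCast.2 hsq).trans (by simpa using pow_dvd_pow_of_dvd hx 2)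

theorem card_ker_castHom [NeZero n] (h : m ∣ n) :
    Nat.card (RingHom.ker (castHom h (ZMod m))) = n / m := by
  have : NeZero m := ⟨fun hm => NeZero.ne n (Nat.eq_zero_of_zero_dvd (hm ▸ h))⟩
  have hsurj := (castHom h (ZMod m)).toAddMonoidHom.range_eq_top_of_surjective
    (ZMod.ringHom_surjective _)
  have := (castHom h (ZMod m)).toAddMonoidHom.ker.card_mul_index
  rw [AddSubgroup.index_ker, hsurj] at this
  simp only [AddSubgroup.card_top, Nat.card_zmod] at this
  exact (Nat.div_eq_of_eq_mul_left (NeZero.pos m) this.symm).symm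

end ZMod

namespace Matrix

variable {ι R S : Type*}

theorem isUnit_of_map_eq_one [Fintype ι] [DecidableEq ι] [CommRing R] [CommRing S]
    {f : R →+* S} (hf : RingHom.ker f ≤ nilradical R) {M : Matrix ι ι R} (hM : M.map f = 1) :
    IsUnit M := by
  have hdet : f M.det = 1 := by rw [RingHom.map_det, RingHom.mapMatrix_apply, hM, det_one]
  have hnil : IsNilpotent (M.det - 1) := hf (by simp [RingHom.mem_ker, hdet])
  rw [isUnit_iff_isUnit_det, ← sub_add_cancel M.det 1]
  exact hnil.isUnit_add_one

variable [AddGroup ι] [DecidableEq ι] [Ring R] [Ring S]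

theorem circulant_map_eq_one_iff (f : R →+* S) (v : ι → R) :
    (circulant v).map f = 1 ↔ ∀ i, v i - (Pi.single 0 1 : ι → R) i ∈ RingHom.ker f := by
  rw [map_circulant, ← circulant_single_one S ι, circulant_injective.eq_iff, funext_iff]
  simp [RingHom.mem_ker, sub_eq_zero, Pi.single_apply, apply_ite f]

def circulantMapEqOneEquiv (f : R →+* S) :
    {M : Matrix ι ι R // (∃ v, M = circulant v) ∧ M.map f = 1} ≃ (ι → RingHom.ker f) where
  toFun M i := ⟨M.1 i 0 - (Pi.single 0 1 : ι → R) i, by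
    obtain ⟨_, ⟨v, rfl⟩, hM⟩ := M
    simpa using (circulant_map_eq_one_iff f v).1 hM i⟩
  invFun w := ⟨circulant fun i => w i + (Pi.single 0 1 : ι → R) i, ⟨_, rfl⟩,
    (circulant_map_eq_one_iff f _).2 fun i => by simp⟩
  left_inv := by
    rintro ⟨_, ⟨v, rfl⟩, _⟩
    simp
  right_inv w := by
    ext i
    simp

end Matrix

/-- **Counting circulant matrices in the congruence kernel**: Let `p` be a prime and
`t ≥ 1`. The kernel `K_t` of the reduction `GL_n(ℤ/p^{t+1}ℤ) → GL_n(ℤ/p^tℤ)` consists of the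
invertible matrices reducing to the identity modulo `p^t`; the number of circulant matrices
in `K_t` is exactly `p^n`. -/
theorem card_circulant_in_congruence_kernel
    (p n t : ℕ) (hp : p.Prime) (ht : 0 < t) :
    Nat.card {M : Matrix (Fin n) (Fin n) (ZMod (p ^ (t + 1))) //
        IsUnit M ∧ (∃ v, M = Matrix.circulant v) ∧
          M.map (ZMod.castHom (pow_dvd_pow p (Nat.le_succ t)) (ZMod (p ^ t))) = 1} =
      p ^ n := by
  set f := ZMod.castHom (pow_dvd_pow p (Nat.le_succ t)) (ZMod (p ^ t))
  have : NeZero (p ^ (t + 1)) := ⟨pow_ne_zero _ hp.ne_zero⟩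
  have hsq : p ^ (t + 1) ∣ (p ^ t) ^ 2 := by
    rw [← pow_mul]
    exact pow_dvd_pow p (by omega)
  have hnil : RingHom.ker f ≤ nilradical _ := fun _ hx =>
    ⟨2, ZMod.sq_eq_zero_of_castHom_eq_zero _ hsq hx⟩
  have hker : Nat.card (RingHom.ker f) = p := by
    rw [ZMod.card_ker_castHom, pow_succ, Nat.mul_div_cancel_left _ (pow_pos hp.pos t)]
  rw [Nat.card_congr (Equiv.subtypeEquivRight fun M =>
    and_iff_right_of_imp fun h => Matrix.isUnit_of_map_eq_one hnil h.2)]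
  obtain _ | m := n
  · rw [pow_zero, Nat.card_eq_one_iff_unique]
    exact ⟨inferInstance, ⟨1, ⟨0, Subsingleton.elim _ _⟩, Subsingleton.elim _ _⟩⟩
  · rw [Nat.card_congr (Matrix.circulantMapEqOneEquiv f), Nat.card_fun, hker, Nat.card_fin]
end

section
/- Let p be a prime and n, t ∈ ℕ. Then |RC_n(ℤ/p^{t+1}ℤ)| = p^n · |RC_n(ℤ/p^tℤ)|. Consequently, |RC_n(ℤ/p^tℤ)| = p^{(t−1)n} · |RC_n(ℤ/pℤ)|. -/
/-! Reduction `ZMod (p ^ t) → ZMod (p ^ s)` with `0 < s ≤ t` is a local ring homomorphism (an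
integer is a unit modulo `p ^ t` iff `p` does not divide it), and taking determinants commutes
with reduction, so a circulant matrix over `ZMod (p ^ t)` is invertible iff its reduction is.
The invertible circulants over `ZMod (p ^ t)` are therefore the full preimage of those over
`ZMod (p ^ s)` under coefficientwise reduction of the defining vectors, a surjective additive map
whose kernel has `(p ^ (t - s)) ^ n` elements. -/

open Matrix

theorem AddMonoidHom.card_preimage_of_surjective {A B : Type*} [AddGroup A] [AddGroup B]
    (f : A →+ B) (hf : Function.Surjective f) (s : Set B) :
    Nat.card (f ⁻¹' s) = Nat.card f.ker * Nat.card s := by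
  let e := QuotientAddGroup.quotientKerEquivOfSurjective f hf
  have hpre : f ⁻¹' s = QuotientAddGroup.mk ⁻¹' (e ⁻¹' s) := rfl
  rw [hpre, Nat.card_congr (QuotientAddGroup.preimageMkEquivAddSubgroupProdSet _ _),
    Nat.card_prod, Nat.card_preimage_of_injective e.injective (by simp [e.surjective.range_eq])]

theorem AddMonoidHom.card_eq_card_ker_mul_of_surjective {A B : Type*} [AddGroup A] [AddGroup B]
    (f : A →+ B) (hf : Function.Surjective f) :
    Nat.card A = Nat.card f.ker * Nat.card B := by
  simpa using f.card_preimage_of_surjective hf Set.univ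

theorem Matrix.isUnit_map_iff {ι R S : Type*} [Fintype ι] [DecidableEq ι] [CommRing R]
    [CommRing S] (f : R →+* S) [IsLocalHom f] (M : Matrix ι ι R) :
    IsUnit (M.map f) ↔ IsUnit M := by
  rw [isUnit_iff_isUnit_det, isUnit_iff_isUnit_det, ← RingHom.mapMatrix_apply,
    ← RingHom.map_det, _root_.isUnit_map_iff]

theorem Matrix.card_isUnit_circulant_of_surjective {ι R S : Type*} [Fintype ι] [DecidableEq ι]
    [Sub ι] [CommRing R] [CommRing S] (f : R →+* S) [IsLocalHom f] (hf : Function.Surjective f) :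
    Nat.card {v : ι → R // IsUnit (circulant v)} =
      Nat.card (RingHom.ker f) ^ Fintype.card ι *
        Nat.card {w : ι → S // IsUnit (circulant w)} := by
  let F : (ι → R) →+ (ι → S) := AddMonoidHom.compLeft f.toAddMonoidHom ι
  have hF : Function.Surjective F := hf.comp_left
  have hker : Nat.card F.ker = Nat.card (RingHom.ker f) ^ Fintype.card ι := by
    let e : F.ker ≃ (ι → RingHom.ker f) :=
      { toFun := fun v i => ⟨v.1 i, congrFun v.2 i⟩
        invFun := fun k => ⟨fun i => k i, funext fun i => (k i).2⟩ }
    rw [Nat.card_congr e, Nat.card_fun, Nat.card_eq_fintype_card (α := ι)]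
  have hunit : ∀ v : ι → R, IsUnit (circulant (F v)) ↔ IsUnit (circulant v) := fun v => by
    rw [← Matrix.isUnit_map_iff f, map_circulant]; rfl
  have hcount := F.card_preimage_of_surjective hF {w | IsUnit (circulant w)}
  rw [hker] at hcount
  exact (Nat.card_congr (Equiv.subtypeEquivRight fun v => (hunit v).symm)).trans hcount

theorem ZMod.isLocalHom_castHom_prime_pow {p s t : ℕ} (hp : p.Prime) (hs : 0 < s) (h : s ≤ t) :
    IsLocalHom (ZMod.castHom (pow_dvd_pow p h) (ZMod (p ^ s))) := by
  have : NeZero (p ^ t) := ⟨pow_ne_zero _ hp.ne_zero⟩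
  refine ⟨fun a ha => ?_⟩
  rw [← ZMod.natCast_zmod_val a, map_natCast, ZMod.isUnit_natCast_iff_not_dvd_pow hp hs] at ha
  rw [← ZMod.natCast_zmod_val a, ZMod.isUnit_natCast_iff_not_dvd_pow hp (hs.trans_le h)]
  exact ha

theorem ZMod.card_ker_castHom_prime_pow {p s t : ℕ} (hp : p.Prime) (h : s ≤ t) :
    Nat.card (RingHom.ker (ZMod.castHom (pow_dvd_pow p h) (ZMod (p ^ s)))) = p ^ (t - s) := by
  have : NeZero (p ^ t) := ⟨pow_ne_zero _ hp.ne_zero⟩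
  have hcard := (ZMod.castHom (pow_dvd_pow p h) (ZMod (p ^ s))).toAddMonoidHom
    |>.card_eq_card_ker_mul_of_surjective (ZMod.ringHom_surjective _)
  have hpow : p ^ t = p ^ (t - s) * p ^ s := by rw [← pow_add, Nat.sub_add_cancel h]
  rw [Nat.card_zmod, Nat.card_zmod] at hcard
  exact Nat.eq_of_mul_eq_mul_right (pow_pos hp.pos s) (hcard.symm.trans hpow)

theorem Matrix.card_isUnit_circulant_zmod_prime_pow {ι : Type*} [Fintype ι] [DecidableEq ι]
    [Sub ι] {p s t : ℕ} (hp : p.Prime) (hs : 0 < s) (h : s ≤ t) :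
    Nat.card {v : ι → ZMod (p ^ t) // IsUnit (circulant v)} =
      p ^ ((t - s) * Fintype.card ι) *
        Nat.card {w : ι → ZMod (p ^ s) // IsUnit (circulant w)} := by
  have := ZMod.isLocalHom_castHom_prime_pow hp hs h
  rw [card_isUnit_circulant_of_surjective _ (ZMod.ringHom_surjective
      (ZMod.castHom (pow_dvd_pow p h) (ZMod (p ^ s)))),
    ZMod.card_ker_castHom_prime_pow hp h, pow_mul]

theorem Fin.card_isUnit_circulant_eq {R : Type*} [CommRing R] (n : ℕ) :
    Nat.card {M : Matrix (Fin n) (Fin n) R // IsUnit M ∧ ∃ v, M = circulant v} =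
      Nat.card {v : Fin n → R // IsUnit (circulant v)} := by
  refine (Nat.card_congr (Equiv.ofBijective (fun v => ⟨circulant v.1, v.2, v.1, rfl⟩)
    ⟨fun v w hvw => ?_, ?_⟩)).symm
  · exact Subtype.ext (Fin.circulant_injective n (congrArg Subtype.val hvw))
  · rintro ⟨M, hM, v, rfl⟩
    exact ⟨⟨v, hM⟩, rfl⟩

/-- **Recursion for the order of `RC_n(ℤ/p^tℤ)`**: Let `p` be a prime, `n ∈ ℕ` and `t ≥ 1`.
Then `|RC_n(ℤ/p^{t+1}ℤ)| = p^n · |RC_n(ℤ/p^tℤ)|`, and consequently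
`|RC_n(ℤ/p^tℤ)| = p^{(t−1)n} · |RC_n(ℤ/pℤ)|`. -/
theorem card_regular_circulant_zmod_prime_pow
    (p n t : ℕ) (hp : p.Prime) (ht : 0 < t) :
    Nat.card {M : Matrix (Fin n) (Fin n) (ZMod (p ^ (t + 1))) //
        IsUnit M ∧ ∃ v, M = Matrix.circulant v} =
      p ^ n *
        Nat.card {M : Matrix (Fin n) (Fin n) (ZMod (p ^ t)) //
          IsUnit M ∧ ∃ v, M = Matrix.circulant v} ∧
    Nat.card {M : Matrix (Fin n) (Fin n) (ZMod (p ^ t)) //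
        IsUnit M ∧ ∃ v, M = Matrix.circulant v} =
      p ^ ((t - 1) * n) *
        Nat.card {M : Matrix (Fin n) (Fin n) (ZMod p) //
          IsUnit M ∧ ∃ v, M = Matrix.circulant v} := by
  simp only [Fin.card_isUnit_circulant_eq]
  constructor
  · have h := card_isUnit_circulant_zmod_prime_pow (ι := Fin n) hp ht (Nat.le_add_right t 1)
    rwa [Nat.add_sub_cancel_left, one_mul, Fintype.card_fin] at h
  · have h := card_isUnit_circulant_zmod_prime_pow (ι := Fin n) hp one_pos ht
    rwa [pow_one, Fintype.card_fin] at h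
end

section
/- Let p be a prime, r, m, s ∈ ℕ with p ∤ m, set n = m·p^r, and let μ ∈ 𝔽_{p^s} be a primitive m-th root of unity. Let Ã be the block-diagonal (n × n)-matrix over 𝔽_{p^s} whose b-th diagonal block (1 ≤ b ≤ m) is the (p^r × p^r)-Jordan block with eigenvalue μ^b. Then for a vector v ∈ 𝔽_{p^s}^n, written in blocks v = (v_{(1)}, …, v_{(m)}) with v_{(b)} = (v_{b,1}, …, v_{b,p^r}) ∈ 𝔽_{p^s}^{p^r}, the vectors Ã^{n−1}v, Ã^{n−2}v, …, Ãv, v form a basis of 𝔽_{p^s}^n if and only if v_{b,p^r} ≠ 0 for all 1 ≤ b ≤ m. -/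
/-!
The vectors `Ãᵏ v`, `k < n`, form a basis iff no nonzero polynomial of degree `< n` kills `v`
under `Ã`. Since `Ã` is block diagonal, `q(Ã) v = 0` iff `q(J_b) v_(b) = 0` for every
Jordan block `J_b` with eigenvalue `μ^b`. On a single Jordan block `J` with eigenvalue `λ`,
`J - λ` shifts coordinates and the last coordinate of `q(J) w` is `q(λ) w_last`; hence if
`w_last ≠ 0` then `q(J) w = 0` forces `(X - λ)^(p^r) ∣ q`, while if `w_last = 0` already
`(X - λ)^(p^r - 1)` kills `w`. The eigenvalues `μ^b` are distinct, so when every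
`v_(b,p^r) ≠ 0` the product of these factors, of degree `n`, divides `q`; when some
`v_(b,p^r) = 0`, lowering the exponent of `X - μ^b` by one gives an annihilating polynomial of
degree `n - 1`.
-/

open Polynomial Matrix

section

variable {K : Type*} [Field K]

section AevalMulVec

variable {ι : Type*} [Fintype ι] [DecidableEq ι]

theorem aeval_mulVec_eq_sum_coeff_smul {n : ℕ} {q : K[X]} (hq : q.degree < n)
    (A : Matrix ι ι K) (v : ι → K) :
    aeval A q *ᵥ v = ∑ k : Fin n, q.coeff k • (A ^ (k : ℕ) *ᵥ v) := by
  rw [sum_fin (fun k c => c • (A ^ k *ᵥ v)) (fun _ => zero_smul _ _) hq, aeval_def,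
    eval₂_eq_sum, Polynomial.sum, Polynomial.sum, sum_mulVec]
  simp only [← Algebra.smul_def, smul_mulVec]

theorem linearIndependent_pow_mulVec_iff {n : ℕ} (A : Matrix ι ι K) (v : ι → K) :
    LinearIndependent K (fun k : Fin n => A ^ (k : ℕ) *ᵥ v) ↔
      ∀ q : K[X], q ≠ 0 → aeval A q *ᵥ v = 0 → n ≤ q.natDegree := by
  rw [Fintype.linearIndependent_iff]
  constructor
  · intro h q hq0 hqv
    by_contra! hlt
    have hq : q.degree < n := (natDegree_lt_iff_degree_lt hq0).1 hlt
    have hcoeff := h (fun k => q.coeff k) (by rw [← aeval_mulVec_eq_sum_coeff_smul hq, hqv])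
    exact hq0 ((degreeLTEquiv_eq_zero_iff_eq_zero (mem_degreeLT.2 hq)).1 (funext hcoeff))
  · intro h g hg
    set q := (degreeLTEquiv K n).symm g
    have hq : (q : K[X]).degree < n := mem_degreeLT.1 q.2
    have hcoeff : degreeLTEquiv K n q = g := LinearEquiv.apply_symm_apply _ g
    have hq0 : (q : K[X]) = 0 := by
      by_contra hq0
      refine (h q hq0 ?_).not_gt ((natDegree_lt_iff_degree_lt hq0).2 hq)
      rw [aeval_mulVec_eq_sum_coeff_smul hq, ← hg, ← hcoeff]
      rfl
    intro k
    rw [← hcoeff, (degreeLTEquiv_eq_zero_iff_eq_zero q.2).2 hq0]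
    rfl

theorem aeval_mulVec_apply_of_row_eq_single {M : Matrix ι ι K} {i : ι} {a : K}
    (hM : M i = Pi.single i a) (q : K[X]) (w : ι → K) :
    (aeval M q *ᵥ w) i = q.eval a * w i := by
  have hrow : ∀ u : ι → K, (M *ᵥ u) i = a * u i := fun u => by
    simp [mulVec, dotProduct, hM, Pi.single_apply]
  induction q using Polynomial.induction_on' generalizing w with
  | add q₁ q₂ h₁ h₂ =>
    simp only [map_add, add_mulVec, Pi.add_apply, h₁, h₂, eval_add, add_mul]
  | monomial k c =>
    induction k generalizing w with
    | zero => simp [Algebra.algebraMap_eq_smul_one, smul_mulVec]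
    | succ k ih =>
      rw [← C_mul_X_pow_eq_monomial] at ih ⊢
      rw [pow_succ, ← mul_assoc, map_mul, aeval_X, ← mulVec_mulVec, ih, hrow]
      simp only [eval_mul, eval_C, eval_pow, eval_X]
      ring

end AevalMulVec

theorem aeval_reindex {m n : Type*} [Fintype m] [DecidableEq m] [Fintype n] [DecidableEq n]
    (e : m ≃ n) (M : Matrix m m K) (q : K[X]) :
    aeval (reindex e e M) q = reindex e e (aeval M q) :=
  aeval_algHom_apply (reindexAlgEquiv K K e) M q

section BlockDiagonal

variable {β ι : Type*} [Fintype β] [DecidableEq β] [Fintype ι]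

theorem blockDiagonal_mulVec_apply (M : β → Matrix ι ι K) (u : ι × β → K) (i : ι) (b : β) :
    (blockDiagonal M *ᵥ u) (i, b) = (M b *ᵥ fun j => u (j, b)) i := by
  simp [mulVec, dotProduct, Fintype.sum_prod_type, blockDiagonal_apply', ite_mul]

theorem reindex_prodComm_blockDiagonal_mulVec_eq_zero_iff (M : β → Matrix ι ι K)
    (u : β × ι → K) :
    reindex (Equiv.prodComm ι β) (Equiv.prodComm ι β) (blockDiagonal M) *ᵥ u = 0 ↔
      ∀ b, M b *ᵥ (fun i => u (b, i)) = 0 := by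
  simp only [funext_iff, Prod.forall, reindex_apply, submatrix_mulVec_equiv,
    Function.comp_apply, Equiv.prodComm_symm, Equiv.prodComm_apply, Prod.swap_prod_mk,
    blockDiagonal_mulVec_apply]
  rfl

theorem aeval_blockDiagonal [DecidableEq ι] (M : β → Matrix ι ι K) (q : K[X]) :
    aeval (blockDiagonal M) q = blockDiagonal fun b => aeval (M b) q := by
  induction q using Polynomial.induction_on' with
  | add q₁ q₂ h₁ h₂ => simp only [map_add, h₁, h₂, ← blockDiagonal_add]; rfl
  | monomial k c =>
    simp only [aeval_monomial, ← blockDiagonal_pow, Algebra.algebraMap_eq_smul_one,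
      smul_mul_assoc, one_mul, ← blockDiagonal_smul]
    rfl

end BlockDiagonal

section JordanBlock

def jordanBlock (N : ℕ) (a : K) : Matrix (Fin N) (Fin N) K :=
  of fun i j => if j = i then a else if (j : ℕ) = i + 1 then 1 else 0

variable {N : ℕ}

theorem jordanBlock_sub_smul_one_mulVec_apply (a : K) (u : Fin N → K) (i : Fin N) :
    ((jordanBlock N a - a • 1) *ᵥ u) i =
      if h : (i : ℕ) + 1 < N then u ⟨i + 1, h⟩ else 0 := by
  have hrow : (jordanBlock N a - a • 1) i =
      fun j : Fin N => if (j : ℕ) = i + 1 then (1 : K) else 0 := by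
    ext j
    rcases eq_or_ne j i with rfl | hji
    · simp [jordanBlock]
    · simp [jordanBlock, hji, one_apply_ne' hji]
  simp only [mulVec, dotProduct, hrow, ite_mul, one_mul, zero_mul]
  split_ifs with h
  · rw [Finset.sum_eq_single ⟨i + 1, h⟩] <;> simp +contextual [Fin.ext_iff]
  · exact Finset.sum_eq_zero fun j _ => if_neg fun hj : (j : ℕ) = i + 1 => h (hj ▸ j.isLt)

theorem jordanBlock_sub_smul_one_pow_mulVec_apply (a : K) (t : ℕ) (u : Fin N → K) (i : Fin N) :
    ((jordanBlock N a - a • 1) ^ t *ᵥ u) i =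
      if h : (i : ℕ) + t < N then u ⟨i + t, h⟩ else 0 := by
  induction t generalizing u with
  | zero => simp
  | succ t ih =>
    rw [pow_succ, ← mulVec_mulVec, ih]
    split_ifs with h₁ h₂ h₂
    · rw [jordanBlock_sub_smul_one_mulVec_apply, dif_pos (by exact h₂)]
      rfl
    · rw [jordanBlock_sub_smul_one_mulVec_apply, dif_neg (by exact h₂)]
    · omega
    · rfl

theorem aeval_jordanBlock_X_sub_C_pow_mul_mulVec_apply (a : K) (t : ℕ) (g : K[X])
    (w : Fin N → K) (i : Fin N) :
    (aeval (jordanBlock N a) ((X - C a) ^ t * g) *ᵥ w) i =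
      if h : (i : ℕ) + t < N then (aeval (jordanBlock N a) g *ᵥ w) ⟨i + t, h⟩ else 0 := by
  rw [map_mul, map_pow, map_sub, aeval_X, aeval_C, Algebra.algebraMap_eq_smul_one,
    ← mulVec_mulVec, jordanBlock_sub_smul_one_pow_mulVec_apply]

theorem aeval_jordanBlock_mulVec_apply_last (hN : 0 < N) (a : K) (q : K[X]) (w : Fin N → K) :
    (aeval (jordanBlock N a) q *ᵥ w) ⟨N - 1, Nat.sub_lt hN one_pos⟩ =
      q.eval a * w ⟨N - 1, Nat.sub_lt hN one_pos⟩ := by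
  refine aeval_mulVec_apply_of_row_eq_single (funext fun j => ?_) q w
  simp only [jordanBlock, of_apply, Pi.single_apply]
  rcases eq_or_ne j ⟨N - 1, Nat.sub_lt hN one_pos⟩ with rfl | hj
  · simp
  · rw [if_neg hj, if_neg hj, if_neg]
    have := j.isLt
    omega

theorem aeval_jordanBlock_mulVec_eq_zero_of_dvd (a : K) {q : K[X]} (hq : (X - C a) ^ N ∣ q)
    (w : Fin N → K) : aeval (jordanBlock N a) q *ᵥ w = 0 := by
  obtain ⟨g, rfl⟩ := hq
  ext i
  rw [aeval_jordanBlock_X_sub_C_pow_mul_mulVec_apply, dif_neg (by omega)]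
  rfl

theorem aeval_jordanBlock_mulVec_eq_zero_of_dvd_of_apply_last_eq_zero (hN : 0 < N) (a : K)
    {q : K[X]} (hq : (X - C a) ^ (N - 1) ∣ q) {w : Fin N → K}
    (hw : w ⟨N - 1, Nat.sub_lt hN one_pos⟩ = 0) : aeval (jordanBlock N a) q *ᵥ w = 0 := by
  obtain ⟨g, rfl⟩ := hq
  ext i
  rw [aeval_jordanBlock_X_sub_C_pow_mul_mulVec_apply]
  split_ifs with h
  · have hi : (⟨i + (N - 1), h⟩ : Fin N) = ⟨N - 1, Nat.sub_lt hN one_pos⟩ := by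
      ext; simp only; omega
    rw [hi, aeval_jordanBlock_mulVec_apply_last hN, hw, mul_zero]
    rfl
  · rfl

/- Write `q = (X - a)^t * g` with `g(a) ≠ 0`. If `t < N`, coordinate `N - 1 - t` of `q(J) w`
is the last coordinate of `g(J) w`, namely `g(a) * w_last ≠ 0`. -/
theorem pow_dvd_of_aeval_jordanBlock_mulVec_eq_zero (hN : 0 < N) (a : K) {q : K[X]}
    {w : Fin N → K} (hw : w ⟨N - 1, Nat.sub_lt hN one_pos⟩ ≠ 0)
    (hq : aeval (jordanBlock N a) q *ᵥ w = 0) : (X - C a) ^ N ∣ q := by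
  by_contra hdvd
  have hq0 : q ≠ 0 := by rintro rfl; exact hdvd (dvd_zero _)
  obtain ⟨g, hqg, hg⟩ := q.exists_eq_pow_rootMultiplicity_mul_and_not_dvd hq0 a
  generalize q.rootMultiplicity a = t at hqg
  have ht : t < N := by
    by_contra! ht
    exact hdvd ((pow_dvd_pow _ ht).trans ⟨g, hqg⟩)
  have hlast : (⟨N - 1 - t + t, by omega⟩ : Fin N) = ⟨N - 1, Nat.sub_lt hN one_pos⟩ := by
    ext; simp only; omega
  have hcoord := congrFun hq ⟨N - 1 - t, by omega⟩
  rw [hqg, aeval_jordanBlock_X_sub_C_pow_mul_mulVec_apply,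
    dif_pos (by simp only; omega)] at hcoord
  simp only [hlast, aeval_jordanBlock_mulVec_apply_last hN, Pi.zero_apply, mul_eq_zero, hw,
    or_false] at hcoord
  exact hg (dvd_iff_isRoot.2 hcoord)

end JordanBlock

section JordanBlocks

variable {β : Type*} [Fintype β] {N : ℕ}

theorem le_natDegree_of_forall_aeval_jordanBlock_mulVec_eq_zero (hN : 0 < N) {a : β → K}
    (ha : Function.Injective a) {w : β → Fin N → K}
    (hw : ∀ b, w b ⟨N - 1, Nat.sub_lt hN one_pos⟩ ≠ 0) {q : K[X]} (hq0 : q ≠ 0)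
    (hq : ∀ b, aeval (jordanBlock N (a b)) q *ᵥ w b = 0) :
    Fintype.card β * N ≤ q.natDegree := by
  have hdvd : ∏ b, (X - C (a b)) ^ N ∣ q :=
    Fintype.prod_dvd_of_coprime (fun _ _ hb => (pairwise_coprime_X_sub_C ha hb).pow)
      fun b => pow_dvd_of_aeval_jordanBlock_mulVec_eq_zero hN (a b) (hw b) (hq b)
  calc Fintype.card β * N = (∏ b, (X - C (a b)) ^ N).natDegree := by
        simp [natDegree_prod _ _ fun b _ => pow_ne_zero N (X_sub_C_ne_zero (a b))]
    _ ≤ q.natDegree := natDegree_le_of_dvd hdvd hq0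

variable [DecidableEq β]

theorem exists_natDegree_lt_forall_aeval_jordanBlock_mulVec_eq_zero (hN : 0 < N) (a : β → K)
    {w : β → Fin N → K} {b : β} (hb : w b ⟨N - 1, Nat.sub_lt hN one_pos⟩ = 0) :
    ∃ q : K[X], q ≠ 0 ∧ q.natDegree < Fintype.card β * N ∧
      ∀ b', aeval (jordanBlock N (a b')) q *ᵥ w b' = 0 := by
  set P := ∏ b' ∈ Finset.univ.erase b, (X - C (a b')) ^ N
  have hP : P.Monic := monic_prod_of_monic _ _ fun b' _ => (monic_X_sub_C (a b')).pow N
  refine ⟨(X - C (a b)) ^ (N - 1) * P, ((monic_X_sub_C (a b)).pow _ |>.mul hP).ne_zero, ?_, ?_⟩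
  · have hcard : 0 < Fintype.card β := Fintype.card_pos_iff.2 ⟨b⟩
    rw [((monic_X_sub_C (a b)).pow _).natDegree_mul hP, natDegree_pow, natDegree_X_sub_C,
      natDegree_prod_of_monic _ _ fun b' _ => (monic_X_sub_C (a b')).pow N]
    simp only [natDegree_pow, natDegree_X_sub_C, mul_one, Finset.sum_const,
      Finset.card_erase_of_mem (Finset.mem_univ b), Finset.card_univ, smul_eq_mul]
    have := Nat.le_mul_of_pos_left N hcard
    rw [Nat.sub_mul, one_mul]
    omega
  · intro b'
    rcases eq_or_ne b' b with rfl | hb'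
    · exact aeval_jordanBlock_mulVec_eq_zero_of_dvd_of_apply_last_eq_zero hN _
        (dvd_mul_right _ _) hb
    · exact aeval_jordanBlock_mulVec_eq_zero_of_dvd _ (dvd_mul_of_dvd_right
        (Finset.dvd_prod_of_mem _ (Finset.mem_erase.2 ⟨hb', Finset.mem_univ _⟩)) _) _

theorem forall_le_natDegree_of_aeval_jordanBlock_mulVec_eq_zero_iff (hN : 0 < N) {a : β → K}
    (ha : Function.Injective a) (w : β → Fin N → K) :
    (∀ q : K[X], q ≠ 0 → (∀ b, aeval (jordanBlock N (a b)) q *ᵥ w b = 0) →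
        Fintype.card β * N ≤ q.natDegree) ↔
      ∀ b, w b ⟨N - 1, Nat.sub_lt hN one_pos⟩ ≠ 0 := by
  refine ⟨fun h b hb => ?_,
    fun hw q => le_natDegree_of_forall_aeval_jordanBlock_mulVec_eq_zero hN ha hw⟩
  obtain ⟨q, hq0, hlt, hq⟩ :=
    exists_natDegree_lt_forall_aeval_jordanBlock_mulVec_eq_zero hN a hb
  exact (h q hq0 hq).not_gt hlt

end JordanBlocks

end

theorem IsPrimitiveRoot.injective_pow_succ {R : Type*} [CommRing R] [IsDomain R]
    {μ : R} {m : ℕ} (hμ : IsPrimitiveRoot μ m) :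
    Function.Injective fun b : Fin m => μ ^ ((b : ℕ) + 1) := by
  intro b c hbc
  have hμ0 : μ ≠ 0 := hμ.ne_zero b.pos.ne'
  simp only [pow_succ] at hbc
  exact Fin.ext (hμ.pow_inj b.isLt c.isLt (mul_right_cancel₀ hμ0 hbc))

theorem jordan_form_basis_criterion_general
    (p r m n : ℕ) (hp : p.Prime) (hn : n = m * p ^ r)
    (F : Type*) [Field F]
    (μ : F) (hμ : IsPrimitiveRoot μ m)
    (A : Matrix (Fin m × Fin (p ^ r)) (Fin m × Fin (p ^ r)) F)
    (hA : ∀ (b b' : Fin m) (i j : Fin (p ^ r)),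
      A (b, i) (b', j) =
        if b = b' then
          (if j = i then μ ^ ((b : ℕ) + 1)
            else if (j : ℕ) = (i : ℕ) + 1 then 1 else 0)
        else 0)
    (v : Fin m × Fin (p ^ r) → F) :
    (LinearIndependent F (fun k : Fin n => (A ^ (k : ℕ)).mulVec v) ∧
        Submodule.span F (Set.range fun k : Fin n => (A ^ (k : ℕ)).mulVec v) = ⊤) ↔
      ∀ b : Fin m, v (b, ⟨p ^ r - 1, Nat.sub_lt (pow_pos hp.pos r) Nat.one_pos⟩) ≠ 0 := by
  set J := fun b : Fin m => jordanBlock (p ^ r) (μ ^ ((b : ℕ) + 1))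
  have hAJ : A = reindex (Equiv.prodComm _ _) (Equiv.prodComm _ _) (blockDiagonal J) := by
    ext ⟨b, i⟩ ⟨b', j⟩
    simp [hA, J, jordanBlock, blockDiagonal_apply', eq_comm]
  rw [and_iff_left_of_imp fun h => h.span_eq_top_of_card_eq_finrank' (by simp [hn]),
    linearIndependent_pow_mulVec_iff]
  have key := forall_le_natDegree_of_aeval_jordanBlock_mulVec_eq_zero_iff (pow_pos hp.pos r)
    hμ.injective_pow_succ fun b i => v (b, i)
  rw [Fintype.card_fin] at key
  simpa only [hAJ, aeval_reindex, aeval_blockDiagonal,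
    reindex_prodComm_blockDiagonal_mulVec_eq_zero_iff, hn] using key

/-- **Equation (4) (the set `V(Ã, p^s)`)**: Let `p` be a prime, `p ∤ m`, `n = m·p^r`, let `F`
be the finite field with `p^s` elements and `μ ∈ F` a primitive `m`-th root of unity. Let `Ã`
be the block-diagonal matrix whose `b`-th diagonal block (`1 ≤ b ≤ m`, here `0`-based via
`b+1`) is the `(p^r × p^r)`-Jordan block with eigenvalue `μ^b`. Then for `v ∈ F^n` (written
in blocks `v_{(b)} ∈ F^{p^r}`), the vectors `Ã^{n−1}v, …, Ãv, v` form a basis of `F^n` if and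
only if the last coordinate `v_{b, p^r}` of every block is nonzero. -/
theorem jordan_form_basis_criterion
    (p r m s n : ℕ) (hp : p.Prime) (hm : ¬ p ∣ m) (hs : s ≠ 0) (hn : n = m * p ^ r)
    (F : Type*) [Field F] [Fintype F] (hF : Fintype.card F = p ^ s)
    (μ : F) (hμ : IsPrimitiveRoot μ m)
    (A : Matrix (Fin m × Fin (p ^ r)) (Fin m × Fin (p ^ r)) F)
    (hA : ∀ (b b' : Fin m) (i j : Fin (p ^ r)),
      A (b, i) (b', j) =
        if b = b' then
          (if j = i then μ ^ ((b : ℕ) + 1)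
            else if (j : ℕ) = (i : ℕ) + 1 then 1 else 0)
        else 0)
    (v : Fin m × Fin (p ^ r) → F) :
    (LinearIndependent F (fun k : Fin n => (A ^ (k : ℕ)).mulVec v) ∧
        Submodule.span F (Set.range fun k : Fin n => (A ^ (k : ℕ)).mulVec v) = ⊤) ↔
      ∀ b : Fin m, v (b, ⟨p ^ r - 1, Nat.sub_lt (pow_pos hp.pos r) Nat.one_pos⟩) ≠ 0 :=
  jordan_form_basis_criterion_general p r m n hp hn F μ hμ A hA v
end
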